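/- Let (R, m) be a commutative Noetherian local ring and M a separated R-module such that the m-adic completion M̂ is a flat R-module. The following are equivalent: (i) M is totally separated; (ii) for every prime ideal p of R, the module M/pM is separated; (iii) M is pure in M̂. -/

import Mathlib

open IsLocalRing TensorProduct

universe u v w x

/-- A linear map `f : A → B` is pure if `X ⊗ f` is injective for every
finitely generated `R`-module `X`. -/
def IsPureMap {R : Type u} [CommRing R] {A : Type v} {B : Type w}
    [AddCommGroup A] [Module R A] [AddCommGroup B] [Module R B] (f : A →ₗ[R] B) : Prop :=
  ∀ (X : Type u) [AddCommGroup X] [Module R X], Module.Finite R X →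
    Function.Injective (LinearMap.lTensor X f)

/-- A submodule is pure if its inclusion is a pure map. -/
def IsPureSubmodule {R : Type u} [CommRing R] {B : Type v} [AddCommGroup B] [Module R B]
    (A : Submodule R B) : Prop :=
  IsPureMap A.subtype

/-- `M` is totally separated if `X ⊗ M` is (m-adically) separated for every
finitely generated `R`-module `X`. -/
def TotallySeparated (R : Type u) [CommRing R] [IsLocalRing R]
    (M : Type v) [AddCommGroup M] [Module R M] : Prop :=
  ∀ (X : Type u) [AddCommGroup X] [Module R X], Module.Finite R X →
    IsHausdorff (maximalIdeal R) (TensorProduct R X M)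

/-!
The heart of the matter is that for a flat, `I`-adically complete module `F` over a Noetherian
ring, `F ⊗ X` is `I`-adically separated for every finitely generated `X`. Writing `X = R^r / K`,
`F ⊗ X` is the cokernel of `F ⊗ K → F^r`; the Artin–Rees estimate `I^(n+c) R^r ∩ K ⊆ I^n K`
survives the flat base change, and a submodule with this property which is the image of a
complete module (here `F^s ↠ F ⊗ K`) is closed.

Applied to `F = M̂`, this gives (iii) ⇒ (i), since `X ⊗ M` embeds into `X ⊗ M̂`. Conversely the
kernel of `X ⊗ M → X ⊗ M̂` lies in every `m^n (X ⊗ M)`, so (i) ⇒ (iii); (i) ⇒ (ii) is the case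
`X = R/p`. Finally (ii) says that `R/p ⊗ M → R/p ⊗ M̂` is injective for every prime `p`, and a
prime filtration of `X` propagates this to every finitely generated `X` because `M̂` is flat.
-/

section AdicTransfer

variable {R : Type*} [CommRing R] (I : Ideal R) {M N : Type*} [AddCommGroup M] [Module R M]
  [AddCommGroup N] [Module R N]

theorem IsHausdorff.of_injective [IsHausdorff I N] {f : M →ₗ[R] N}
    (hf : Function.Injective f) : IsHausdorff I M := by
  rw [← AdicCompletion.of_injective_iff]
  refine Function.Injective.of_comp (f := AdicCompletion.map I f) ?_
  have : AdicCompletion.map I f ∘ AdicCompletion.of I M = AdicCompletion.of I N ∘ f :=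
    funext_iff.mpr (AdicCompletion.map_of I f)
  rw [this]
  exact (AdicCompletion.of_injective I N).comp hf

theorem IsHausdorff.of_linearEquiv [IsHausdorff I M] (e : M ≃ₗ[R] N) : IsHausdorff I N :=
  .of_injective I e.symm.injective

theorem IsPrecomplete.of_surjective [IsPrecomplete I M] {f : M →ₗ[R] N}
    (hf : Function.Surjective f) : IsPrecomplete I N := by
  rw [← AdicCompletion.of_surjective_iff]
  refine Function.Surjective.of_comp (g := f) ?_
  have : AdicCompletion.of I N ∘ f = AdicCompletion.map I f ∘ AdicCompletion.of I M :=
    funext_iff.mpr fun x ↦ (AdicCompletion.map_of I f x).symm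
  rw [this]
  exact (AdicCompletion.map_surjective I hf).comp (AdicCompletion.of_surjective I M)

theorem IsAdicComplete.of_linearEquiv [IsAdicComplete I M] (e : M ≃ₗ[R] N) :
    IsAdicComplete I N where
  toIsHausdorff := .of_linearEquiv I e
  toIsPrecomplete := .of_surjective I e.surjective

instance IsAdicComplete.pi {ι : Type*} [Fintype ι] (M : ι → Type*) [∀ i, AddCommGroup (M i)]
    [∀ i, Module R (M i)] [∀ i, IsAdicComplete I (M i)] : IsAdicComplete I (∀ i, M i) := by
  classical
  rw [← AdicCompletion.of_bijective_iff]
  have : ⇑(AdicCompletion.piEquivOfFintype I M) ∘ AdicCompletion.of I (∀ i, M i) =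
      Pi.map fun i ↦ AdicCompletion.of I (M i) := by
    ext x i
    simp
  rw [← (AdicCompletion.piEquivOfFintype I M).bijective.of_comp_iff', this]
  exact Function.Bijective.piMap fun i ↦ AdicCompletion.of_bijective I (M i)

end AdicTransfer

section ArtinRees

variable {R : Type*} [CommRing R] (I : Ideal R) {P N Q : Type*} [AddCommGroup P] [Module R P]
  [AddCommGroup N] [Module R N] [AddCommGroup Q] [Module R Q]
  {ρ : P →ₗ[R] N} {c : ℕ}

theorem mem_range_of_forall_mem_range_sup_pow_smul_top [IsPrecomplete I P] [IsHausdorff I N]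
    (hρ : ∀ n, (I ^ (n + c) • ⊤ : Submodule R N) ⊓ LinearMap.range ρ ≤ I ^ n • LinearMap.range ρ)
    {y : N} (hy : ∀ n, y ∈ LinearMap.range ρ ⊔ (I ^ n • ⊤ : Submodule R N)) :
    y ∈ LinearMap.range ρ := by
  have step : ∀ n u, y - ρ u ∈ (I ^ (n + c) • ⊤ : Submodule R N) →
      ∃ w ∈ (I ^ n • ⊤ : Submodule R P), y - ρ (u + w) ∈ (I ^ (n + 1 + c) • ⊤ : Submodule R N) := by
    intro n u hu
    obtain ⟨_, ⟨v, rfl⟩, e, he, hye⟩ := Submodule.mem_sup.mp (hy (n + 1 + c))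
    have hvu : ρ (v - u) ∈ (I ^ (n + c) • ⊤ : Submodule R N) := by
      rw [show ρ (v - u) = (y - ρ u) - e by rw [map_sub, ← hye]; abel]
      exact sub_mem hu (Submodule.smul_mono_left (Ideal.pow_le_pow_right (by omega)) he)
    have hmap : I ^ n • LinearMap.range ρ = Submodule.map ρ (I ^ n • ⊤) := by
      rw [Submodule.map_smul'', Submodule.map_top]
    obtain ⟨w, hw, hwvu⟩ := hmap ▸ hρ n ⟨hvu, v - u, rfl⟩
    refine ⟨w, hw, ?_⟩
    rwa [map_add, hwvu, map_sub, ← hye, add_sub_cancel, add_sub_cancel_left]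
  choose! w hw hyw using step
  obtain ⟨_, ⟨u₀, rfl⟩, e, he, hye⟩ := Submodule.mem_sup.mp (hy c)
  let u : ℕ → P := fun n ↦ Nat.rec u₀ (fun n x ↦ x + w n x) n
  have hu : ∀ n, y - ρ (u n) ∈ (I ^ (n + c) • ⊤ : Submodule R N) := by
    intro n
    induction n with
    | zero => simpa [u, ← hye] using he
    | succ n ih => exact hyw n (u n) ih
  have hcauchy : AdicCompletion.IsAdicCauchy I P u := by
    rw [AdicCompletion.isAdicCauchy_iff]
    intro n
    rw [SModEq.sub_mem, show u n - u (n + 1) = -w n (u n) by simp [u]]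
    exact neg_mem (hw n (u n) (hu n))
  obtain ⟨L, hL⟩ := IsPrecomplete.prec ‹_› hcauchy
  refine ⟨L, (IsHausdorff.eq_iff_smodEq (I := I)).mpr fun n ↦ SModEq.sub_mem.mpr ?_⟩
  rw [show ρ L - y = ρ (L - u n) - (y - ρ (u n)) by rw [map_sub]; abel]
  refine sub_mem (Submodule.smul_top_le_comap_smul_top _ ρ ?_)
    (Submodule.smul_mono_left (Ideal.pow_le_pow_right (by omega)) (hu n))
  exact neg_sub (u n) L ▸ neg_mem (SModEq.sub_mem.mp (hL n))

theorem IsHausdorff.of_exact_of_pow_smul_top_inf_range_le [IsPrecomplete I P] [IsHausdorff I N]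
    {π : N →ₗ[R] Q} (hexact : Function.Exact ρ π) (hπ : Function.Surjective π)
    (hρ : ∀ n, (I ^ (n + c) • ⊤ : Submodule R N) ⊓ LinearMap.range ρ ≤ I ^ n • LinearMap.range ρ) :
    IsHausdorff I Q := by
  refine ⟨fun z hz ↦ ?_⟩
  obtain ⟨y, rfl⟩ := hπ z
  rw [← LinearMap.mem_ker, hexact.linearMap_ker_eq]
  refine mem_range_of_forall_mem_range_sup_pow_smul_top I hρ fun n ↦ ?_
  rw [← hexact.linearMap_ker_eq, sup_comm, ← Submodule.comap_smul_top_of_surjective _ _ hπ]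
  exact Submodule.mem_comap.mpr (SModEq.zero.mp (hz n))

end ArtinRees

section TensorRange

variable {R : Type*} [CommRing R] (F : Type*) {N : Type*} [AddCommGroup F] [Module R F]
  [AddCommGroup N] [Module R N]

theorem range_lTensor_subtype_mono {A B : Submodule R N} (h : A ≤ B) :
    LinearMap.range (A.subtype.lTensor F) ≤ LinearMap.range (B.subtype.lTensor F) := by
  rw [← Submodule.subtype_comp_inclusion A B h, LinearMap.lTensor_comp]
  exact LinearMap.range_comp_le_range _ _

theorem range_lTensor_subtype_smul (J : Ideal R) (A : Submodule R N) :
    LinearMap.range ((J • A).subtype.lTensor F) = J • LinearMap.range (A.subtype.lTensor F) := by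
  apply le_antisymm
  · rintro _ ⟨t, rfl⟩
    induction t using TensorProduct.induction_on with
    | zero => simp
    | tmul f a =>
      rw [LinearMap.lTensor_tmul]
      refine Submodule.smul_induction_on
        (p := (f ⊗ₜ · ∈ J • LinearMap.range (A.subtype.lTensor F))) a.2 ?_ ?_
      · intro r hr x hx
        rw [tmul_smul]
        exact Submodule.smul_mem_smul hr ⟨f ⊗ₜ ⟨x, hx⟩, rfl⟩
      · intro _ _ h₁ h₂
        rw [tmul_add]
        exact add_mem h₁ h₂
    | add a b ha hb => rw [map_add]; exact add_mem ha hb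
  · refine Submodule.smul_le.mpr fun r hr _ ⟨t, ht⟩ ↦ ?_
    let g : A →ₗ[R] ↥(J • A) :=
      (r • A.subtype).codRestrict _ fun a ↦ Submodule.smul_mem_smul hr a.2
    refine ⟨g.lTensor F t, ?_⟩
    rw [← ht, ← LinearMap.comp_apply, ← LinearMap.lTensor_comp]
    exact congr($(LinearMap.lTensor_smul (M := F) r A.subtype) t)

theorem range_lTensor_subtype_smul_top (J : Ideal R) :
    LinearMap.range ((J • ⊤ : Submodule R N).subtype.lTensor F) = J • ⊤ := by
  rw [range_lTensor_subtype_smul, LinearMap.range_eq_top.mpr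
    (LinearMap.lTensor_surjective F fun x ↦ ⟨⟨x, trivial⟩, rfl⟩)]

theorem range_lTensor_subtype_inf [Module.Flat R F] (A B : Submodule R N) :
    LinearMap.range ((A ⊓ B).subtype.lTensor F) =
      LinearMap.range (A.subtype.lTensor F) ⊓ LinearMap.range (B.subtype.lTensor F) := by
  refine le_antisymm (le_inf (range_lTensor_subtype_mono F inf_le_left)
    (range_lTensor_subtype_mono F inf_le_right)) ?_
  rintro _ ⟨⟨a, rfl⟩, ⟨b, hb⟩⟩
  have hexact : Function.Exact (Submodule.inclusion (inf_le_left : A ⊓ B ≤ A))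
      (B.mkQ ∘ₗ A.subtype) := by
    rw [LinearMap.exact_iff, LinearMap.ker_comp, Submodule.ker_mkQ, Submodule.range_inclusion]
    ext; simp
  obtain ⟨t, rfl⟩ := (Module.Flat.lTensor_exact F hexact a).mp <| by
    rw [LinearMap.lTensor_comp, LinearMap.comp_apply, ← hb, ← LinearMap.comp_apply,
      ← LinearMap.lTensor_comp, (LinearMap.exact_subtype_mkQ B).linearMap_comp_eq_zero,
      LinearMap.lTensor_zero, LinearMap.zero_apply]
  exact ⟨t, by rw [← LinearMap.comp_apply, ← LinearMap.lTensor_comp,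
    Submodule.subtype_comp_inclusion]⟩

end TensorRange

section FlatComplete

variable {R : Type*} [CommRing R] [IsNoetherianRing R] (I : Ideal R) (F : Type*)
  [AddCommGroup F] [Module R F] [Module.Flat R F]

theorem exists_pow_smul_top_inf_range_lTensor_le {N : Type*} [AddCommGroup N] [Module R N]
    [Module.Finite R N] (K : Submodule R N) :
    ∃ c, ∀ n, (I ^ (n + c) • ⊤ : Submodule R (F ⊗[R] N)) ⊓ LinearMap.range (K.subtype.lTensor F) ≤
      I ^ n • LinearMap.range (K.subtype.lTensor F) := by
  obtain ⟨c, hc⟩ := I.exists_pow_inf_eq_pow_smul K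
  refine ⟨c, fun n ↦ ?_⟩
  rw [← range_lTensor_subtype_smul_top, ← range_lTensor_subtype_inf, ← range_lTensor_subtype_smul]
  refine range_lTensor_subtype_mono F ?_
  rw [hc (n + c) (by omega), Nat.add_sub_cancel]
  exact Submodule.smul_mono le_rfl inf_le_right

theorem isHausdorff_tensor_of_isAdicComplete [IsAdicComplete I F] (X : Type*) [AddCommGroup X]
    [Module R X] [Module.Finite R X] : IsHausdorff I (F ⊗[R] X) := by
  obtain ⟨r, π, hπ⟩ := Module.Finite.exists_fin' R X
  obtain ⟨s, q, hq⟩ := Module.Finite.exists_fin' R (LinearMap.ker π)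
  have hrange : LinearMap.range (((LinearMap.ker π).subtype ∘ₗ q).lTensor F) =
      LinearMap.range ((LinearMap.ker π).subtype.lTensor F) := by
    rw [LinearMap.lTensor_comp, LinearMap.range_comp,
      LinearMap.range_eq_top.mpr (LinearMap.lTensor_surjective F hq), Submodule.map_top]
  have := IsAdicComplete.of_linearEquiv I (piScalarRight R R F (Fin s)).symm
  have := IsAdicComplete.of_linearEquiv I (piScalarRight R R F (Fin r)).symm
  obtain ⟨c, hc⟩ := exists_pow_smul_top_inf_range_lTensor_le I F (LinearMap.ker π)
  refine IsHausdorff.of_exact_of_pow_smul_top_inf_range_le I (c := c) ?_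
    (LinearMap.lTensor_surjective F hπ) (hrange ▸ hc)
  rw [LinearMap.exact_iff, hrange]
  exact LinearMap.exact_iff.mp (lTensor_exact F (LinearMap.exact_subtype_ker_map π) hπ)

end FlatComplete

section TensorInjective

variable {R : Type*} [CommRing R] {M B : Type*} [AddCommGroup M] [Module R M]
  [AddCommGroup B] [Module R B] (f : M →ₗ[R] B)

theorem injective_lTensor_of_linearEquiv {N N' : Type*} [AddCommGroup N] [Module R N]
    [AddCommGroup N'] [Module R N'] (e : N ≃ₗ[R] N') (h : Function.Injective (f.lTensor N')) :
    Function.Injective (f.lTensor N) := by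
  have : f.lTensor N =
      e.symm.toLinearMap.rTensor B ∘ₗ f.lTensor N' ∘ₗ e.toLinearMap.rTensor M := by
    ext; simp
  rw [this]
  exact (LinearEquiv.rTensor B e.symm).injective.comp (h.comp (LinearEquiv.rTensor M e).injective)

theorem injective_lTensor_of_exact [Module.Flat R B] {N₁ N₂ N₃ : Type*} [AddCommGroup N₁]
    [Module R N₁] [AddCommGroup N₂] [Module R N₂] [AddCommGroup N₃] [Module R N₃]
    {i : N₁ →ₗ[R] N₂} {π : N₂ →ₗ[R] N₃} (hi : Function.Injective i)
    (hπ : Function.Surjective π) (hexact : Function.Exact i π)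
    (h₁ : Function.Injective (f.lTensor N₁)) (h₃ : Function.Injective (f.lTensor N₃)) :
    Function.Injective (f.lTensor N₂) := by
  refine (injective_iff_map_eq_zero _).mpr fun z hz ↦ ?_
  obtain ⟨y, rfl⟩ := (rTensor_exact M hexact hπ z).mp <| h₃ <| by
    rw [map_zero, ← LinearMap.comp_apply, LinearMap.lTensor_comp_rTensor,
      ← LinearMap.rTensor_comp_lTensor, LinearMap.comp_apply, hz, map_zero]
  have : f.lTensor N₁ y = 0 := Module.Flat.rTensor_preserves_injective_linearMap i hi <| by
    rw [map_zero, ← LinearMap.comp_apply, LinearMap.rTensor_comp_lTensor,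
      ← LinearMap.lTensor_comp_rTensor, LinearMap.comp_apply, hz]
  rw [h₁ (this.trans (map_zero _).symm), map_zero]

theorem injective_lTensor_of_forall_isPrime [IsNoetherianRing R] [Module.Flat R B]
    (hf : ∀ p : Ideal R, p.IsPrime → Function.Injective (f.lTensor (R ⧸ p)))
    (X : Type*) [AddCommGroup X] [Module R X] [Module.Finite R X] :
    Function.Injective (f.lTensor X) := by
  induction ‹Module.Finite R X› using
    IsNoetherianRing.induction_on_isQuotientEquivQuotientPrime R with
  | subsingleton N => exact Function.injective_of_subsingleton _
  | quotient N p e => exact injective_lTensor_of_linearEquiv f e (hf p.1 p.2)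
  | exact N₁ N₂ N₃ i π hi hπ hexact h₁ h₃ => exact injective_lTensor_of_exact f hi hπ hexact h₁ h₃

theorem quotTensorEquivQuotSMul_comp_lTensor {N : Type*} [AddCommGroup N] [Module R N]
    (J : Ideal R) (g : M →ₗ[R] N) :
    (quotTensorEquivQuotSMul N J).toLinearMap ∘ₗ g.lTensor (R ⧸ J) =
      Submodule.mapQ _ _ g (Submodule.smul_top_le_comap_smul_top J g) ∘ₗ
        (quotTensorEquivQuotSMul M J).toLinearMap := by
  ext; simp

theorem injective_lTensor_quotient_iff {N : Type*} [AddCommGroup N] [Module R N]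
    (J : Ideal R) (g : M →ₗ[R] N) :
    Function.Injective (g.lTensor (R ⧸ J)) ↔
      Submodule.comap g (J • ⊤) ≤ J • ⊤ := by
  rw [← EquivLike.comp_injective _ (quotTensorEquivQuotSMul N J), ← LinearEquiv.coe_toLinearMap,
    ← LinearMap.coe_comp, quotTensorEquivQuotSMul_comp_lTensor, LinearMap.coe_comp,
    LinearEquiv.coe_coe, EquivLike.injective_comp, ← LinearMap.ker_eq_bot, Submodule.ker_mapQ,
    ← LinearMap.le_ker_iff_map, Submodule.ker_mkQ]

end TensorInjective

section Completion

variable {R : Type*} [CommRing R] (I : Ideal R) (M : Type*) [AddCommGroup M] [Module R M]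

theorem AdicCompletion.injective_lTensor_of (X : Type*) [AddCommGroup X] [Module R X]
    [IsHausdorff I (X ⊗[R] M)] : Function.Injective ((of I M).lTensor X) := by
  refine (injective_iff_map_eq_zero _).mpr fun z hz ↦
    IsHausdorff.haus ‹_› z fun n ↦ SModEq.zero.mpr ?_
  obtain ⟨t, rfl⟩ := (lTensor_exact X (LinearMap.exact_subtype_mkQ (I ^ n • ⊤ : Submodule R M))
    (Submodule.mkQ_surjective _) z).mp <| by
      rw [← eval_comp_of, LinearMap.lTensor_comp, LinearMap.comp_apply, hz, _root_.map_zero]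
  exact range_lTensor_subtype_smul_top X (N := M) (I ^ n) ▸ ⟨t, rfl⟩

theorem Submodule.mkQ_mem_smul_top_iff (P : Submodule R M) (J : Ideal R) (x : M) :
    P.mkQ x ∈ (J • ⊤ : Submodule R (M ⧸ P)) ↔ x ∈ J • ⊤ ⊔ P := by
  rw [← Submodule.mem_comap, Submodule.comap_smul_top_of_surjective _ _ P.mkQ_surjective,
    Submodule.ker_mkQ]

theorem AdicCompletion.comap_of_smul_top_le (J : Ideal R)
    [IsHausdorff I (M ⧸ (J • ⊤ : Submodule R M))] :
    Submodule.comap (of I M) (J • ⊤) ≤ J • ⊤ := by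
  intro x hx
  refine (Submodule.Quotient.mk_eq_zero _).mp (IsHausdorff.haus ‹_› _ fun n ↦ SModEq.zero.mpr ?_)
  have h := Submodule.smul_top_le_comap_smul_top J (eval I M n) hx
  rw [Submodule.mem_comap, eval_of, Submodule.mkQ_mem_smul_top_iff] at h
  rwa [← Submodule.mkQ_apply, Submodule.mkQ_mem_smul_top_iff, sup_comm]

end Completion

theorem totallySeparated_tfae_of_flat_completion
    (R : Type u) [CommRing R] [IsNoetherianRing R] [IsLocalRing R]
    (M : Type v) [AddCommGroup M] [Module R M]
    (hflat : Module.Flat R (AdicCompletion (maximalIdeal R) M)) :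
    (TotallySeparated R M ↔
      ∀ p : Ideal R, p.IsPrime →
        IsHausdorff (maximalIdeal R) (M ⧸ (p • ⊤ : Submodule R M))) ∧
    (TotallySeparated R M ↔ IsPureMap (AdicCompletion.of (maximalIdeal R) M)) := by
  have := AdicCompletion.isAdicComplete (M := M) (IsNoetherian.noetherian (maximalIdeal R))
  have pure_of_sep : TotallySeparated R M → IsPureMap (AdicCompletion.of (maximalIdeal R) M) :=
    fun h X _ _ hX ↦ have := h X hX; AdicCompletion.injective_lTensor_of _ M X
  have sep_of_pure : IsPureMap (AdicCompletion.of (maximalIdeal R) M) → TotallySeparated R M := by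
    intro h X _ _ hX
    have := isHausdorff_tensor_of_isAdicComplete (maximalIdeal R)
      (AdicCompletion (maximalIdeal R) M) X
    have := IsHausdorff.of_linearEquiv (maximalIdeal R)
      (TensorProduct.comm R (AdicCompletion (maximalIdeal R) M) X)
    exact IsHausdorff.of_injective (maximalIdeal R) (h X hX)
  have primes_of_sep : TotallySeparated R M → ∀ p : Ideal R, p.IsPrime →
      IsHausdorff (maximalIdeal R) (M ⧸ (p • ⊤ : Submodule R M)) := fun h p _ ↦
    have := h (R ⧸ p) inferInstance
    IsHausdorff.of_linearEquiv _ (quotTensorEquivQuotSMul M p)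
  have pure_of_primes : (∀ p : Ideal R, p.IsPrime →
      IsHausdorff (maximalIdeal R) (M ⧸ (p • ⊤ : Submodule R M))) →
      IsPureMap (AdicCompletion.of (maximalIdeal R) M) := fun h X _ _ _ ↦
    injective_lTensor_of_forall_isPrime _ (fun p hp ↦ have := h p hp;
      (injective_lTensor_quotient_iff p _).mpr (AdicCompletion.comap_of_smul_top_le _ M p)) X
  exact ⟨⟨primes_of_sep, sep_of_pure ∘ pure_of_primes⟩, ⟨pure_of_sep, sep_of_pure⟩⟩
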